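/- arXiv:1211.4733 — 5 statements merged into one kernel-verified Lean document; each statement's English description precedes it below -/
import Mathlib

section
/- Let n be an odd perfect number such that h_p ≥ 2 for every prime p dividing n, where h_p is the exponent of p in the prime factorisation of n. Then 16/(7·ζ(3)) < ∏_{p | n} (1 + 1/p + 1/p²), where the product runs over the distinct prime factors p of n and ζ is the Riemann zeta function. -/
/-!
Writing `h_p` for the exponent of `p` in `n`, the abundancy is
`σ(n)/n = ∏ (1 + p⁻¹ + ⋯ + p^(-h_p)) < ∏ (1 - p⁻¹)⁻¹`, and `(1 - x)⁻¹ = (1 + x + x²)(1 - x³)⁻¹`,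
so perfection gives `2 < ∏ (1 + 1/p + 1/p²) · ∏ (1 - p⁻³)⁻¹`. The second factor is a partial
Euler product of `ζ(3)` over odd primes, hence at most `∑_{m odd} m⁻³ = (7/8) ζ(3)`.
-/

open Finset

noncomputable def oneDivPowHom (e : ℕ) : ℕ →* ℝ :=
  (powMonoidHom e).comp (invMonoidHom.comp (Nat.castRingHom ℝ))

lemma oneDivPowHom_apply (e m : ℕ) : oneDivPowHom e m = 1 / (m : ℝ) ^ e := by
  simp [oneDivPowHom, inv_pow]

lemma summable_one_div_nat_add_one_pow {e : ℕ} (he : 1 < e) :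
    Summable fun k : ℕ ↦ 1 / ((k : ℝ) + 1) ^ e := by
  simpa using (summable_nat_add_iff 1).2 (Real.summable_one_div_nat_pow.2 he)

lemma summable_one_div_two_mul_add_one_pow {e : ℕ} (he : 1 < e) :
    Summable fun k : ℕ ↦ 1 / (2 * (k : ℝ) + 1) ^ e :=
  (summable_one_div_nat_add_one_pow he).of_nonneg_of_le (fun _ ↦ by positivity) fun k ↦
    one_div_le_one_div_of_le (by positivity) (by gcongr; linarith [(k.cast_nonneg : (0 : ℝ) ≤ k)])

lemma tsum_one_div_odd_pow {e : ℕ} (he : 1 < e) :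
    ∑' k : ℕ, 1 / (2 * (k : ℝ) + 1) ^ e = (1 - 1 / 2 ^ e) * ∑' k : ℕ, 1 / ((k : ℝ) + 1) ^ e := by
  have hsum := summable_one_div_nat_add_one_pow he
  have heven (k : ℕ) : 1 / ((↑(2 * k) : ℝ) + 1) ^ e = 1 / (2 * (k : ℝ) + 1) ^ e := by
    push_cast; rfl
  have hodd (k : ℕ) :
      1 / ((↑(2 * k + 1) : ℝ) + 1) ^ e = 1 / 2 ^ e * (1 / ((k : ℝ) + 1) ^ e) := by
    rw [one_div_mul_one_div, ← mul_pow]; push_cast; ring_nf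
  have hsplit := tsum_even_add_odd (f := fun k : ℕ ↦ 1 / ((k : ℝ) + 1) ^ e)
    (by simpa only [heven] using summable_one_div_two_mul_add_one_pow he)
    (by simpa only [hodd] using hsum.mul_left _)
  simp only [heven, hodd, tsum_mul_left] at hsplit
  linear_combination hsplit

lemma odd_of_mem_factoredNumbers {s : Finset ℕ} (hs : 2 ∉ s) {m : ℕ}
    (hm : m ∈ Nat.factoredNumbers s) : Odd m :=
  Nat.odd_iff.2 <| Nat.two_dvd_ne_zero.1 fun h2 ↦
    hs <| Nat.mem_factoredNumbers'.1 hm 2 Nat.prime_two h2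

/-- Every integer built from primes in `s` is odd, so the Euler product is dominated by the sum
over odd integers. -/
lemma prod_inv_one_sub_one_div_prime_pow_le {s : Finset ℕ} (hs : 2 ∉ s) {e : ℕ} (he : 1 < e) :
    ∏ p ∈ s with p.Prime, (1 - 1 / (p : ℝ) ^ e)⁻¹ ≤ ∑' k : ℕ, 1 / (2 * (k : ℝ) + 1) ^ e := by
  have hsum : Summable (oneDivPowHom e) :=
    (Real.summable_one_div_nat_pow.2 he).congr fun m ↦ (oneDivPowHom_apply e m).symm
  simp only [← oneDivPowHom_apply]
  rw [EulerProduct.prod_filter_prime_geometric_eq_tsum_factoredNumbers hsum]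
  have hdiv (m : Nat.factoredNumbers s) : 2 * (m / 2 : ℕ) + 1 = (m : ℕ) :=
    Nat.two_mul_div_two_add_one_of_odd (odd_of_mem_factoredNumbers hs m.2)
  refine Summable.tsum_le_tsum_of_inj (fun m : Nat.factoredNumbers s ↦ (m / 2 : ℕ))
    (fun a b h ↦ Subtype.ext (by rw [← hdiv a, ← hdiv b]; exact congrArg (2 * · + 1) h))
    (fun _ _ ↦ by positivity) (fun m ↦ le_of_eq ?_) (hsum.subtype _)
    (summable_one_div_two_mul_add_one_pow he)
  rw [oneDivPowHom_apply]
  conv_lhs => rw [← hdiv m]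
  push_cast; rfl

lemma inv_one_sub_eq_mul_inv_one_sub_pow_three (x : ℝ) :
    (1 - x)⁻¹ = (1 + x + x ^ 2) * (1 - x ^ 3)⁻¹ := by
  have hq : 1 + x + x ^ 2 ≠ 0 := by nlinarith [sq_nonneg (x + 1 / 2)]
  rw [show 1 - x ^ 3 = (1 + x + x ^ 2) * (1 - x) by ring, mul_inv, mul_inv_cancel_left₀ hq]

lemma geom_sum_div_pow_lt_inv_one_sub_one_div {x : ℝ} (hx : 1 < x) (h : ℕ) :
    (∑ k ∈ range (h + 1), x ^ k) / x ^ h < (1 - 1 / x)⁻¹ := by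
  have hx0 : 0 < x := by linarith
  rw [geom_sum_eq hx.ne', one_sub_div hx0.ne', inv_div, div_div,
    div_lt_div_iff₀ (by positivity) (by linarith)]
  nlinarith [pow_pos hx0 h, pow_succ x h]

lemma sum_divisors_div_lt_prod_inv_one_sub_one_div {n : ℕ} (hn : 1 < n) :
    (∑ d ∈ n.divisors, (d : ℝ)) / n < ∏ p ∈ n.primeFactors, (1 - 1 / (p : ℝ))⁻¹ := by
  have hn0 : n ≠ 0 := by omega
  have hp (p) (hp : p ∈ n.primeFactors) : (1 : ℝ) < p := by
    exact_mod_cast (Nat.prime_of_mem_primeFactors hp).one_lt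
  nth_rw 2 [Nat.prod_primeFactors_pow_factorization hn0]
  rw [← Nat.cast_sum, Nat.sum_divisors hn0]
  push_cast
  rw [← prod_div_distrib]
  exact prod_lt_prod_of_nonempty (fun p hp' ↦ by have := hp p hp'; positivity)
    (fun p hp' ↦ geom_sum_div_pow_lt_inv_one_sub_one_div (hp p hp') _)
    (Nat.nonempty_primeFactors.2 hn)

lemma Nat.Perfect.two_lt_prod_inv_one_sub_one_div {n : ℕ} (hn : n.Perfect) :
    2 < ∏ p ∈ n.primeFactors, (1 - 1 / (p : ℝ))⁻¹ := by
  have hn1 : 1 < n := Nat.lt_of_le_of_ne hn.2 (by rintro rfl; simp [Nat.Perfect] at hn)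
  have hσ : ∑ d ∈ n.divisors, d = 2 * n := (Nat.perfect_iff_sum_divisors_eq_two_mul hn.2).1 hn
  have h := sum_divisors_div_lt_prod_inv_one_sub_one_div hn1
  rwa [← Nat.cast_sum, hσ, Nat.cast_mul, Nat.cast_two, mul_div_cancel_right₀ _ (by positivity)]
    at h

theorem opn_alpha_two_lower_bound_general (n : ℕ) (hn : Nat.Perfect n) (hodd : Odd n) :
    16 / (7 * ∑' k : ℕ, (1 : ℝ) / ((k : ℝ) + 1) ^ 3) <
      ∏ p ∈ n.primeFactors, (1 + 1 / (p : ℝ) + 1 / (p : ℝ) ^ 2) := by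
  set ζ3 := ∑' k : ℕ, (1 : ℝ) / ((k : ℝ) + 1) ^ 3
  set P := ∏ p ∈ n.primeFactors, (1 + 1 / (p : ℝ) + 1 / (p : ℝ) ^ 2)
  have hζ3 : 0 < ζ3 :=
    (summable_one_div_nat_add_one_pow (by norm_num)).tsum_pos (fun _ ↦ by positivity) 0
      (by norm_num)
  have hP : 0 < P := prod_pos fun p _ ↦ by positivity
  have hfactor : ∏ p ∈ n.primeFactors, (1 - 1 / (p : ℝ))⁻¹
      = P * ∏ p ∈ n.primeFactors, (1 - 1 / (p : ℝ) ^ 3)⁻¹ := by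
    rw [← prod_mul_distrib]
    exact prod_congr rfl fun p _ ↦ by
      rw [inv_one_sub_eq_mul_inv_one_sub_pow_three, one_div_pow, one_div_pow]
  have heuler : ∏ p ∈ n.primeFactors, (1 - 1 / (p : ℝ) ^ 3)⁻¹ ≤ 7 / 8 * ζ3 := by
    have h := prod_inv_one_sub_one_div_prime_pow_le
      (fun h ↦ hodd.not_two_dvd_nat (Nat.dvd_of_mem_primeFactors h)) (by norm_num : 1 < 3)
    rwa [filter_true_of_mem fun p ↦ Nat.prime_of_mem_primeFactors,
      tsum_one_div_odd_pow (by norm_num), show (1 : ℝ) - 1 / 2 ^ 3 = 7 / 8 by norm_num] at h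
  have h2 : 2 < P * (7 / 8 * ζ3) := calc
    2 < P * ∏ p ∈ n.primeFactors, (1 - 1 / (p : ℝ) ^ 3)⁻¹ :=
      hfactor ▸ hn.two_lt_prod_inv_one_sub_one_div
    _ ≤ P * (7 / 8 * ζ3) := mul_le_mul_of_nonneg_left heuler hP.le
  rw [div_lt_iff₀ (by positivity)]
  linarith

/-- If `n` is an odd perfect number with `h_p ≥ 2` for every prime `p ∣ n`, then
`16/(7·ζ(3)) < ∏_{p ∣ n} (1 + 1/p + 1/p²)`, where `ζ(3) = ∑_{k ≥ 1} 1/k³`. -/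
theorem opn_alpha_two_lower_bound (n : ℕ) (hn : Nat.Perfect n) (hodd : Odd n)
    (h2 : ∀ p ∈ n.primeFactors, 2 ≤ n.factorization p) :
    16 / (7 * ∑' k : ℕ, (1 : ℝ) / ((k : ℝ) + 1) ^ 3) <
      ∏ p ∈ n.primeFactors, (1 + 1 / (p : ℝ) + 1 / (p : ℝ) ^ 2) :=
  opn_alpha_two_lower_bound_general n hn hodd
end

section
/- Let n be an odd perfect number with exactly m ≥ 3 distinct prime factors, and suppose the third smallest prime factor of n is the r-th prime p_r (where p_1 = 2, p_2 = 3, p_3 = 5, ...). Then (1 + 1/3) · (1 + 1/5) · ∏_{j=r}^{r+m-3} (1 + 1/p_j) > 16/π². -/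
/-!
Every divisor of `n` has the form `(∏ p ∈ s, p) * b ^ 2` with `s` a set of prime factors of
`n` and `b ∣ n`, so `σ(n)/n = ∑_{d ∣ n} 1/d ≤ ∏_{p ∣ n} (1 + 1/p) · ∑_{b ∣ n} 1/b²`. For a
perfect number the left side is `2`, and for odd `n` the last sum is a finite part of
`∑_{b odd} 1/b² = π²/8`; hence `∏_{p ∣ n} (1 + 1/p) > 16/π²`. This product only grows when
the odd prime factors of `n`, listed increasingly, are replaced by the smallest primes they
can be: `3`, `5`, and then `p_r, p_{r+1}, …` from the third one on.
-/

open Finset Real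

namespace Nat

theorem sum_divisors_one_div (n : ℕ) :
    ∑ d ∈ n.divisors, (1 : ℝ) / d = (∑ d ∈ n.divisors, d : ℕ) / n := by
  rcases eq_or_ne n 0 with rfl | hn
  · simp
  rw [← sum_div_divisors, Nat.cast_sum, sum_div]
  refine sum_congr rfl fun d hd => ?_
  have hd0 : (d : ℝ) ≠ 0 := Nat.cast_ne_zero.mpr (Nat.pos_of_mem_divisors hd).ne'
  rw [Nat.cast_div (Nat.dvd_of_mem_divisors hd) hd0]
  field_simp

theorem Perfect.sum_divisors_one_div {n : ℕ} (h : n.Perfect) :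
    ∑ d ∈ n.divisors, (1 : ℝ) / d = 2 := by
  rw [Nat.sum_divisors_one_div, (perfect_iff_sum_divisors_eq_two_mul h.2).mp h, Nat.cast_mul]
  field_simp [h.2.ne']
  push_cast
  ring

theorem exists_prod_mul_sq_eq_of_mem_divisors {n d : ℕ} (hd : d ∈ n.divisors) :
    ∃ s ⊆ n.primeFactors, ∃ b ∈ n.divisors, (∏ p ∈ s, p) * b ^ 2 = d := by
  obtain ⟨hdn, hn⟩ := mem_divisors.mp hd
  obtain ⟨a, b, -, -, hab, ha⟩ := sq_mul_squarefree_of_pos (Nat.pos_of_mem_divisors hd)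
  refine ⟨a.primeFactors, ?_, b, ?_, ?_⟩
  · exact (primeFactors_mono (Dvd.intro_left _ hab) (Nat.pos_of_mem_divisors hd).ne').trans
      (primeFactors_mono hdn hn)
  · exact mem_divisors.mpr ⟨(Dvd.intro (b * a) (by rw [← hab]; ring)).trans hdn, hn⟩
  · rw [prod_primeFactors_of_squarefree ha, ← hab, mul_comm]

theorem sum_divisors_one_div_le (n : ℕ) :
    ∑ d ∈ n.divisors, (1 : ℝ) / d ≤
      (∏ p ∈ n.primeFactors, (1 + 1 / (p : ℝ))) * ∑ b ∈ n.divisors, 1 / (b : ℝ) ^ 2 := by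
  classical
  -- `ψ` need not be injective: covering the divisors suffices for an upper bound.
  let ψ : Finset ℕ × ℕ → ℕ := fun x => (∏ p ∈ x.1, p) * x.2 ^ 2
  have hcover : n.divisors ⊆ (n.primeFactors.powerset ×ˢ n.divisors).image ψ := by
    intro d hd
    obtain ⟨s, hs, b, hb, rfl⟩ := exists_prod_mul_sq_eq_of_mem_divisors hd
    exact mem_image.mpr ⟨(s, b), mem_product.mpr ⟨mem_powerset.mpr hs, hb⟩, rfl⟩
  calc ∑ d ∈ n.divisors, (1 : ℝ) / d
      ≤ ∑ d ∈ (n.primeFactors.powerset ×ˢ n.divisors).image ψ, (1 : ℝ) / d :=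
        sum_le_sum_of_subset_of_nonneg hcover fun _ _ _ => by positivity
    _ ≤ ∑ x ∈ n.primeFactors.powerset ×ˢ n.divisors, (1 : ℝ) / (ψ x : ℕ) :=
        sum_image_le_of_nonneg fun _ _ => by positivity
    _ = _ := by
        rw [prod_one_add, sum_mul_sum, sum_product]
        refine sum_congr rfl fun s _ => sum_congr rfl fun b _ => ?_
        simp only [ψ, Nat.cast_mul, Nat.cast_prod, Nat.cast_pow, one_div, mul_inv,
          prod_inv_distrib]

end Nat

theorem hasSum_indicator_odd_one_div_sq :
    HasSum ({b : ℕ | Odd b}.indicator fun b => 1 / (b : ℝ) ^ 2) (π ^ 2 / 8) := by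
  set f : ℕ → ℝ := fun b => 1 / (b : ℝ) ^ 2
  have heven : HasSum (fun k => f (2 * k)) (π ^ 2 / 24) := by
    have hf : (fun k => f (2 * k)) = fun k => 1 / 4 * f k := by
      funext k
      simp only [f]
      push_cast
      ring
    rw [hf, show π ^ 2 / 24 = 1 / 4 * (π ^ 2 / 6) by ring]
    exact hasSum_zeta_two.mul_left _
  have hinj : Function.Injective fun k : ℕ => 2 * k + 1 := fun a b h => by simpa using h
  have hodd : HasSum (fun k => f (2 * k + 1)) (π ^ 2 / 8) := by
    obtain ⟨o, ho⟩ : Summable fun k => f (2 * k + 1) :=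
      hasSum_zeta_two.summable.comp_injective hinj
    have htotal := (heven.even_add_odd ho).unique hasSum_zeta_two
    rwa [show o = π ^ 2 / 8 by linarith] at ho
  refine (hinj.hasSum_iff fun b hb => Set.indicator_of_notMem (fun hb' => hb ?_) _).mp ?_
  · obtain ⟨k, rfl⟩ := hb'
    exact ⟨k, rfl⟩
  · convert hodd using 2 with k
    exact Set.indicator_of_mem (show 2 * k + 1 ∈ {b : ℕ | Odd b} from odd_two_mul_add_one k) _

theorem sum_one_div_sq_lt_of_forall_odd {s : Finset ℕ} (hs : ∀ b ∈ s, Odd b) :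
    ∑ b ∈ s, 1 / (b : ℝ) ^ 2 < π ^ 2 / 8 := by
  set F := {b : ℕ | Odd b}.indicator fun b => 1 / (b : ℝ) ^ 2
  have hF : ∀ b, Odd b → F b = 1 / (b : ℝ) ^ 2 := fun b hb =>
    Set.indicator_of_mem (s := {b : ℕ | Odd b}) hb _
  set b₀ := 2 * s.sup id + 1
  have hb₀ : b₀ ∉ s := fun h => by
    have : b₀ ≤ s.sup id := le_sup (f := id) h
    omega
  calc ∑ b ∈ s, 1 / (b : ℝ) ^ 2 = ∑ b ∈ s, F b := sum_congr rfl fun b hb => (hF b (hs b hb)).symm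
    _ < F b₀ + ∑ b ∈ s, F b :=
        lt_add_of_pos_left _ (by rw [hF b₀ (odd_two_mul_add_one _)]; positivity)
    _ = ∑ b ∈ insert b₀ s, F b := (sum_insert hb₀).symm
    _ ≤ π ^ 2 / 8 :=
        sum_le_hasSum _ (fun b _ => Set.indicator_nonneg (fun _ _ => by positivity) b)
          hasSum_indicator_odd_one_div_sq

theorem Nat.Perfect.sixteen_div_pi_sq_lt_prod_of_odd {n : ℕ} (hn : n.Perfect) (hodd : Odd n) :
    16 / π ^ 2 < ∏ p ∈ n.primeFactors, (1 + 1 / (p : ℝ)) := by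
  set P := ∏ p ∈ n.primeFactors, (1 + 1 / (p : ℝ))
  have hP : 0 < P := prod_pos fun p _ => by positivity
  have hlt : 2 < P * (π ^ 2 / 8) :=
    calc (2 : ℝ) = ∑ d ∈ n.divisors, (1 : ℝ) / d := hn.sum_divisors_one_div.symm
      _ ≤ P * ∑ b ∈ n.divisors, 1 / (b : ℝ) ^ 2 := Nat.sum_divisors_one_div_le n
      _ < P * (π ^ 2 / 8) := mul_lt_mul_of_pos_left (sum_one_div_sq_lt_of_forall_odd
          fun b hb => hodd.of_dvd_nat (Nat.dvd_of_mem_divisors hb)) hP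
  rw [div_lt_iff₀ (by positivity)]
  linarith

theorem Finset.prod_le_prod_range_add_of_antitone {R : Type*} [CommSemiring R] [PartialOrder R]
    [IsOrderedRing R] {g : ℕ → R} (hg₀ : 0 ≤ g) (hg : Antitone g) {k : ℕ} {t : Finset ℕ}
    (ht : ∀ i ∈ t, k ≤ i) : ∏ i ∈ t, g i ≤ ∏ j ∈ range #t, g (k + j) := by
  induction t using Finset.induction_on_max with
  | empty => simp
  | insert a t hlt ih =>
    have ha : a ∉ t := fun h => (hlt a h).false
    have hcard : #t ≤ a - k := by
      rw [← Nat.card_Ico k a]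
      exact card_le_card fun i hi => mem_Ico.mpr ⟨ht i (mem_insert_of_mem hi), hlt i hi⟩
    have hka : k + #t ≤ a := by have := ht a (mem_insert_self a t); omega
    rw [prod_insert ha, card_insert_of_notMem ha, prod_range_succ, mul_comm]
    exact mul_le_mul (ih fun i hi => ht i (mem_insert_of_mem hi)) (hg hka)
      (hg₀ a) (prod_nonneg fun j _ => hg₀ _)

theorem prod_one_add_one_div_le_prod_nth_prime {k : ℕ} {s : Finset ℕ}
    (hs : ∀ p ∈ s, p.Prime ∧ Nat.nth Nat.Prime k ≤ p) :
    ∏ p ∈ s, (1 + 1 / (p : ℝ)) ≤ ∏ j ∈ range #s, (1 + 1 / (Nat.nth Nat.Prime (k + j) : ℝ)) := by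
  have hinj : Set.InjOn (Nat.count Nat.Prime) s := fun p hp q hq =>
    Nat.count_injective (hs p hp).1 (hs q hq).1
  have hanti : Antitone fun i => 1 + 1 / (Nat.nth Nat.Prime i : ℝ) := fun i j hij => by
    have : (0 : ℝ) < Nat.nth Nat.Prime i := by exact_mod_cast (Nat.prime_nth_prime i).pos
    dsimp only
    gcongr
    exact Nat.nth_monotone Nat.infinite_setOfPred_prime hij
  calc ∏ p ∈ s, (1 + 1 / (p : ℝ))
      = ∏ i ∈ s.image (Nat.count Nat.Prime), (1 + 1 / (Nat.nth Nat.Prime i : ℝ)) := by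
        rw [prod_image hinj]
        exact prod_congr rfl fun p hp => by rw [Nat.nth_count (hs p hp).1]
    _ ≤ ∏ j ∈ range #(s.image (Nat.count Nat.Prime)),
          (1 + 1 / (Nat.nth Nat.Prime (k + j) : ℝ)) := by
        refine prod_le_prod_range_add_of_antitone (fun i => by positivity) hanti ?_
        simp only [mem_image, forall_exists_index, and_imp, forall_apply_eq_imp_iff₂]
        intro p hp
        rw [← Nat.count_nth_of_infinite Nat.infinite_setOfPred_prime k]
        exact Nat.count_monotone _ (hs p hp).2
    _ = _ := by rw [card_image_of_injOn hinj]

theorem Finset.card_filter_lt_orderEmbOfFin {α : Type*} [LinearOrder α] (s : Finset α) {k : ℕ}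
    (h : #s = k) (i : Fin k) : #{x ∈ s | x < s.orderEmbOfFin h i} = i := by
  have : {x ∈ s | x < s.orderEmbOfFin h i} = (Iio i).map (s.orderEmbOfFin h).toEmbedding := by
    ext x
    simp only [mem_filter, mem_map, mem_Iio, RelEmbedding.coe_toEmbedding]
    constructor
    · rintro ⟨hx, hlt⟩
      obtain ⟨j, rfl⟩ : x ∈ Set.range (s.orderEmbOfFin h) := by
        rw [range_orderEmbOfFin]; exact hx
      exact ⟨j, (s.orderEmbOfFin h).lt_iff_lt.mp hlt, rfl⟩
    · rintro ⟨j, hj, rfl⟩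
      exact ⟨orderEmbOfFin_mem s h j, (s.orderEmbOfFin h).lt_iff_lt.mpr hj⟩
  rw [this, card_map, Fin.card_Iio]

theorem prod_one_add_one_div_le_of_orderEmbOfFin_two_eq {s : Finset ℕ} (hs : ∀ p ∈ s, p.Prime)
    (h2 : 2 ∉ s) {m k : ℕ} (hm : #s = m) (hm3 : 3 ≤ m)
    (hthird : s.orderEmbOfFin hm ⟨2, hm3⟩ = Nat.nth Nat.Prime k) :
    ∏ p ∈ s, (1 + 1 / (p : ℝ)) ≤
      (1 + 1 / 3) * (1 + 1 / 5) *
        ∏ j ∈ range (m - 2), (1 + 1 / (Nat.nth Nat.Prime (k + j) : ℝ)) := by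
  set q := Nat.nth Nat.Prime k
  have hsmall : #{p ∈ s | p < q} = 2 := by
    rw [← hthird, card_filter_lt_orderEmbOfFin]
  have hlarge : #{p ∈ s | ¬ p < q} = m - 2 := by
    have := card_filter_add_card_filter_not (s := s) (· < q)
    omega
  have hsmall_ge : ∀ p ∈ {p ∈ s | p < q}, p.Prime ∧ Nat.nth Nat.Prime 1 ≤ p := fun p hp => by
    have hps := (mem_filter.mp hp).1
    exact ⟨hs p hps, Nat.nth_prime_one_eq_three ▸
      (hs p hps).two_le.lt_of_ne' (ne_of_mem_of_not_mem hps h2)⟩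
  have hlarge_ge : ∀ p ∈ {p ∈ s | ¬ p < q}, p.Prime ∧ q ≤ p := fun p hp =>
    ⟨hs p (mem_filter.mp hp).1, not_lt.mp (mem_filter.mp hp).2⟩
  calc ∏ p ∈ s, (1 + 1 / (p : ℝ))
      = (∏ p ∈ s with p < q, (1 + 1 / (p : ℝ))) * ∏ p ∈ s with ¬ p < q, (1 + 1 / (p : ℝ)) :=
        (prod_filter_mul_prod_filter_not _ _ _).symm
    _ ≤ (∏ j ∈ range 2, (1 + 1 / (Nat.nth Nat.Prime (1 + j) : ℝ))) *
          ∏ j ∈ range (m - 2), (1 + 1 / (Nat.nth Nat.Prime (k + j) : ℝ)) := by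
        rw [← hlarge, ← hsmall]
        gcongr
        · exact prod_one_add_one_div_le_prod_nth_prime hsmall_ge
        · exact prod_one_add_one_div_le_prod_nth_prime hlarge_ge
    _ = _ := by
        simp [prod_range_succ, Nat.nth_prime_one_eq_three, Nat.nth_prime_two_eq_five]

/-- Let `n` be an odd perfect number with exactly `m ≥ 3` distinct prime factors whose
third smallest prime factor is the `r`-th prime (1-indexed, so the 1st prime is 2). Then
`(1 + 1/3) · (1 + 1/5) · ∏_{j=r}^{r+m-3} (1 + 1/p_j) > 16/π²`. -/
theorem opn_third_prime_product_gt (n m r : ℕ) (hn : Nat.Perfect n) (hodd : Odd n)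
    (hm : n.primeFactors.card = m) (hm3 : 3 ≤ m) (hr : 1 ≤ r)
    (hthird : (Finset.sort n.primeFactors (· ≤ ·))[2]! = Nat.nth Nat.Prime (r - 1)) :
    (1 + 1 / 3 : ℝ) * (1 + 1 / 5) *
        ∏ j ∈ Finset.Icc r (r + m - 3), (1 + 1 / (Nat.nth Nat.Prime (j - 1) : ℝ)) >
      16 / Real.pi ^ 2 := by
  have hthird' : n.primeFactors.orderEmbOfFin hm ⟨2, hm3⟩ = Nat.nth Nat.Prime (r - 1) := by
    rw [orderEmbOfFin_apply, ← hthird, getElem!_pos _ _ (by rw [length_sort, hm]; omega)]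
    rfl
  have hreindex : ∏ j ∈ Icc r (r + m - 3), (1 + 1 / (Nat.nth Nat.Prime (j - 1) : ℝ)) =
      ∏ j ∈ range (m - 2), (1 + 1 / (Nat.nth Nat.Prime (r - 1 + j) : ℝ)) := by
    rw [← Ico_add_one_right_eq_Icc, prod_Ico_eq_prod_range,
      show r + m - 3 + 1 - r = m - 2 by omega]
    exact prod_congr rfl fun j _ => by rw [show r + j - 1 = r - 1 + j by omega]
  rw [gt_iff_lt, hreindex]
  exact (hn.sixteen_div_pi_sq_lt_prod_of_odd hodd).trans_le
    (prod_one_add_one_div_le_of_orderEmbOfFin_two_eq (fun _ => Nat.prime_of_mem_primeFactors)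
      (fun h2 => hodd.not_two_dvd_nat (Nat.dvd_of_mem_primeFactors h2)) hm hm3 hthird')
end

section
/- If n is an odd perfect number with exactly 9 distinct prime factors, then the smallest prime factor of n is at most 11. -/
/-!
The abundancy index `σ(n)/n = ∏_{p^e ∥ n} (1 + p⁻¹ + ⋯ + p⁻ᵉ)` is strictly smaller than
`∏_{p ∣ n} p/(p-1)`, and `p/(p-1)` decreases in `p`. If every prime factor of `n` exceeded 11, the
nine prime factors would contribute at most `13/12 · (17/16)^8 < 2` (only one of them can be `13`,
the others are at least `17`), so `n` could not be perfect.
-/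

open Finset

section Abundancy

variable {K : Type*} [Field K] [LinearOrder K] [IsStrictOrderedRing K]

theorem geom_sum_lt_pow_mul_div_sub_one {x : K} (hx : 1 < x) (e : ℕ) :
    ∑ k ∈ range (e + 1), x ^ k < x ^ e * (x / (x - 1)) := by
  rw [mul_div_assoc', lt_div_iff₀ (sub_pos.2 hx), geom_sum_mul, ← pow_succ]
  linarith

theorem Nat.sum_divisors_lt_mul_prod_primeFactors {n : ℕ} (hn : 1 < n) :
    (∑ i ∈ n.divisors, i : K) < n * ∏ p ∈ n.primeFactors, (p / (p - 1) : K) := by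
  have hn0 : n ≠ 0 := by omega
  have hprime : ∀ p ∈ n.primeFactors, 1 < (p : K) := fun p hp ↦
    Nat.one_lt_cast.2 (Nat.prime_of_mem_primeFactors hp).one_lt
  calc (∑ i ∈ n.divisors, i : K)
      = ∏ p ∈ n.primeFactors, ∑ k ∈ range (n.factorization p + 1), (p : K) ^ k := by
        rw [← Nat.cast_sum, Nat.sum_divisors hn0]
        push_cast
        rfl
    _ < ∏ p ∈ n.primeFactors, (p : K) ^ n.factorization p * (p / (p - 1)) :=
        prod_lt_prod_of_nonempty
          (fun p hp ↦ sum_pos (fun k _ ↦ pow_pos (zero_lt_one.trans (hprime p hp)) k)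
            nonempty_range_add_one)
          (fun p hp ↦ geom_sum_lt_pow_mul_div_sub_one (hprime p hp) _)
          (Nat.nonempty_primeFactors.2 hn)
    _ = n * ∏ p ∈ n.primeFactors, (p / (p - 1) : K) := by
        rw [prod_mul_distrib]
        congr
        exact_mod_cast (Nat.prod_primeFactors_pow_factorization hn0).symm

theorem div_sub_one_le_div_sub_one {a b : K} (ha : 1 < a) (hab : a ≤ b) :
    b / (b - 1) ≤ a / (a - 1) := by
  rw [div_le_div_iff₀ (by linarith) (by linarith)]
  linarith

end Abundancy

theorem Nat.Prime.seventeen_le_of_eleven_lt {p : ℕ} (hp : p.Prime) (h11 : 11 < p) (h13 : p ≠ 13) :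
    17 ≤ p := by
  by_contra! h17
  interval_cases p <;> first | exact h13 rfl | norm_num at hp

theorem prod_div_sub_one_le_of_eleven_lt {S : Finset ℕ} {k : ℕ}
    (hS : ∀ p ∈ S, p.Prime ∧ 11 < p) (hcard : #S = k + 1) :
    ∏ p ∈ S, ((p : ℚ) / (p - 1)) ≤ 13 / 12 * (17 / 16) ^ k := by
  have h17 : ∀ p ∈ S, p ≠ 13 → (p : ℚ) / (p - 1) ≤ 17 / 16 := fun p hp h13 ↦ by
    have := (hS p hp).1.seventeen_le_of_eleven_lt (hS p hp).2 h13
    calc (p : ℚ) / (p - 1) ≤ 17 / (17 - 1) :=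
          div_sub_one_le_div_sub_one (by norm_num) (by exact_mod_cast this)
      _ = 17 / 16 := by norm_num
  have hpos : ∀ p ∈ S, 0 ≤ (p : ℚ) / (p - 1) := fun p hp ↦ by
    have : (11 : ℚ) < p := by exact_mod_cast (hS p hp).2
    exact div_nonneg (by linarith) (by linarith)
  by_cases h13 : 13 ∈ S
  · have hrest : ∏ p ∈ S.erase 13, ((p : ℚ) / (p - 1)) ≤ (17 / 16) ^ k :=
      calc ∏ p ∈ S.erase 13, ((p : ℚ) / (p - 1)) ≤ ∏ _p ∈ S.erase 13, (17 / 16 : ℚ) :=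
            prod_le_prod (fun p hp ↦ hpos p (mem_of_mem_erase hp))
              (fun p hp ↦ h17 p (mem_of_mem_erase hp) (ne_of_mem_erase hp))
        _ = (17 / 16) ^ k := by rw [prod_const, card_erase_of_mem h13, hcard, Nat.add_sub_cancel]
    rw [← mul_prod_erase S _ h13, show ((13 : ℕ) : ℚ) / ((13 : ℕ) - 1) = 13 / 12 by norm_num]
    exact mul_le_mul_of_nonneg_left hrest (by norm_num)
  · calc ∏ p ∈ S, ((p : ℚ) / (p - 1)) ≤ ∏ _p ∈ S, (17 / 16 : ℚ) :=
          prod_le_prod hpos fun p hp ↦ h17 p hp (ne_of_mem_of_not_mem hp h13)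
      _ = 17 / 16 * (17 / 16) ^ k := by rw [prod_const, hcard, pow_succ']
      _ ≤ 13 / 12 * (17 / 16) ^ k := mul_le_mul_of_nonneg_right (by norm_num) (by positivity)

theorem opn_nine_factors_minFac_le_general (n : ℕ) (hn : Nat.Perfect n)
    (hω : n.primeFactors.card = 9) : n.minFac ≤ 11 := by
  by_contra! hmin
  have hprimes : ∀ p ∈ n.primeFactors, p.Prime ∧ 11 < p := fun p hp ↦
    ⟨Nat.prime_of_mem_primeFactors hp,
      hmin.trans_le (Nat.minFac_le_of_dvd (Nat.prime_of_mem_primeFactors hp).two_le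
        (Nat.dvd_of_mem_primeFactors hp))⟩
  have hn1 : 1 < n := by
    by_contra! h
    interval_cases n <;> simp at hω
  have hσ : (∑ i ∈ n.divisors, i : ℚ) = 2 * (n : ℚ) := by
    rw [← Nat.cast_sum, (Nat.perfect_iff_sum_divisors_eq_two_mul hn.2).1 hn]
    push_cast
    ring
  have habund := Nat.sum_divisors_lt_mul_prod_primeFactors (K := ℚ) hn1
  have hbound : ∏ p ∈ n.primeFactors, ((p : ℚ) / (p - 1)) < 2 :=
    (prod_div_sub_one_le_of_eleven_lt (k := 8) hprimes hω).trans_lt (by norm_num)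
  have hn0 : (0 : ℚ) < n := by exact_mod_cast hn.2
  rw [hσ] at habund
  nlinarith

/-- If `n` is an odd perfect number with exactly 9 distinct prime factors, then the
smallest prime factor of `n` is at most 11. -/
theorem opn_nine_factors_minFac_le (n : ℕ) (hn : Nat.Perfect n) (hodd : Odd n)
    (hω : n.primeFactors.card = 9) : n.minFac ≤ 11 :=
  opn_nine_factors_minFac_le_general n hn hω
end

section
/- If n is an odd perfect number with exactly 9 distinct prime factors, then the third smallest prime factor of n is at most 509. -/
/-!
Since `σ(p^k)/p^k < p/(p-1)`, the abundancy index `σ(n)/n` of any `n > 1` is smaller than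
`∏_{p ∣ n} p/(p-1)`, and for a perfect number it equals `2`. The map `p ↦ p/(p-1)` is
decreasing, so if the prime factors of an odd `n` are `p₀ < p₁ < p₂ < ⋯` with `p₂ ≥ 510`, the
product is at most `3/2 · 5/4 · (510/509)^7 < 2` when `n` has nine of them.
-/

open Finset

theorem geom_sum_div_pow_lt {K : Type*} [Field K] [LinearOrder K] [IsStrictOrderedRing K]
    {x : K} (hx : 1 < x) (k : ℕ) :
    (∑ i ∈ range (k + 1), x ^ i) / x ^ k < x / (x - 1) := by
  have hx0 : 0 < x - 1 := sub_pos.mpr hx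
  have hxk : 0 < x ^ k := pow_pos (by linarith) k
  rw [geom_sum_eq hx.ne', div_div, div_lt_div_iff₀ (by positivity) hx0, pow_succ]
  nlinarith

theorem Nat.div_cast_sub_one_le_of_le {a b : ℕ} (ha : 2 ≤ a) (hab : a ≤ b) :
    (b : ℚ) / (b - 1) ≤ a / (a - 1) := by
  have ha' : (2 : ℚ) ≤ a := by exact_mod_cast ha
  have hab' : (a : ℚ) ≤ b := by exact_mod_cast hab
  rw [div_le_div_iff₀ (by linarith) (by linarith)]
  nlinarith

theorem Nat.div_cast_sub_one_nonneg (p : ℕ) : 0 ≤ (p : ℚ) / (p - 1) := by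
  rcases p with _ | p
  · simp
  · exact div_nonneg (by positivity) (by simp)

theorem Nat.Perfect.abundancyIndex_eq_two {n : ℕ} (hn : n.Perfect) : n.abundancyIndex = 2 := by
  have hn0 : (n : ℚ) ≠ 0 := by exact_mod_cast hn.2.ne'
  rw [Nat.abundancyIndex, (Nat.perfect_iff_sum_divisors_eq_two_mul hn.2).mp hn]
  push_cast
  field_simp

theorem Nat.abundancyIndex_lt_prod_primeFactors {n : ℕ} (hn : 1 < n) :
    n.abundancyIndex < ∏ p ∈ n.primeFactors, (p : ℚ) / (p - 1) := by
  have hn0 : n ≠ 0 := by omega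
  have hsplit : n.abundancyIndex = ∏ p ∈ n.primeFactors,
      (∑ i ∈ range (n.factorization p + 1), (p : ℚ) ^ i) / (p : ℚ) ^ n.factorization p := by
    have hcast : (n : ℚ) = ∏ p ∈ n.primeFactors, (p : ℚ) ^ n.factorization p := by
      exact_mod_cast (Nat.prod_factorization_pow_eq_self hn0).symm
    rw [Nat.abundancyIndex, Nat.sum_divisors hn0, hcast, prod_div_distrib]
    push_cast
    rfl
  rw [hsplit]
  refine prod_lt_prod_of_nonempty (fun p hp => ?_) (fun p hp => ?_)
    (Nat.nonempty_primeFactors.mpr hn)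
  all_goals
    have hp : 1 < (p : ℚ) := by exact_mod_cast (Nat.prime_of_mem_primeFactors hp).one_lt
  · exact _root_.div_pos (sum_pos (fun i _ => by positivity) nonempty_range_add_one)
      (by positivity)
  · exact geom_sum_div_pow_lt hp _

theorem List.prod_map_div_cast_sub_one_le_pow {L : List ℕ} {q : ℕ} (hq : 2 ≤ q)
    (hL : ∀ p ∈ L, q ≤ p) :
    (L.map fun p : ℕ => (p : ℚ) / (p - 1)).prod ≤ ((q : ℚ) / (q - 1)) ^ L.length := by
  have hle := List.prod_map_le_prod_map₀ (fun p : ℕ => (p : ℚ) / (p - 1))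
    (fun _ => (q : ℚ) / (q - 1)) (fun p _ => p.div_cast_sub_one_nonneg)
    (fun p hp => Nat.div_cast_sub_one_le_of_le hq (hL p hp))
  simpa [List.map_const', List.prod_replicate] using hle

theorem List.prod_map_div_cast_sub_one_le_of_odd {p₀ p₁ q : ℕ} {L : List ℕ}
    (hsorted : (p₀ :: p₁ :: q :: L).Pairwise (· < ·))
    (hodd : ∀ p ∈ p₀ :: p₁ :: q :: L, Odd p ∧ 1 < p) :
    ((p₀ :: p₁ :: q :: L).map fun p : ℕ => (p : ℚ) / (p - 1)).prod ≤
      3 / 2 * (5 / 4) * ((q : ℚ) / (q - 1)) ^ (q :: L).length := by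
  simp only [List.pairwise_cons, List.mem_cons, forall_eq_or_imp] at hsorted hodd
  obtain ⟨⟨h01, -⟩, -, hqL, -⟩ := hsorted
  obtain ⟨⟨hp₀, hp₀'⟩, ⟨hp₁, -⟩, ⟨-, hq⟩, -⟩ := hodd
  have h3 : 3 ≤ p₀ := by rcases hp₀ with ⟨k, rfl⟩; omega
  have h5 : 5 ≤ p₁ := by rcases hp₀ with ⟨k, rfl⟩; rcases hp₁ with ⟨l, rfl⟩; omega
  have htail := List.prod_map_div_cast_sub_one_le_pow (L := q :: L) hq
    (by simpa using fun p hp => (hqL p hp).le)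
  have htail_nonneg := List.prod_nonneg (s := (q :: L).map fun p : ℕ => (p : ℚ) / (p - 1))
    (by simp [Nat.div_cast_sub_one_nonneg])
  rw [List.map_cons, List.map_cons, List.prod_cons, List.prod_cons]
  have hsecond := mul_le_mul (Nat.div_cast_sub_one_le_of_le (by norm_num) h5) htail
    htail_nonneg (Nat.div_cast_sub_one_nonneg 5)
  refine (mul_le_mul (Nat.div_cast_sub_one_le_of_le (by norm_num) h3)
    hsecond (mul_nonneg (Nat.div_cast_sub_one_nonneg _) htail_nonneg)
    (Nat.div_cast_sub_one_nonneg 3)).trans_eq ?_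
  norm_num
  ring

theorem Finset.prod_div_cast_sub_one_le_of_odd (S : Finset ℕ) (hS : ∀ p ∈ S, Odd p ∧ 1 < p)
    (hcard : 3 ≤ #S) :
    ∏ p ∈ S, (p : ℚ) / (p - 1) ≤ (3 / 2 : ℚ) * (5 / 4) *
      (((S.sort (· ≤ ·))[2]! : ℚ) / ((S.sort (· ≤ ·))[2]! - 1)) ^ (#S - 2) := by
  obtain ⟨p₀, p₁, q, L, hsort⟩ : ∃ p₀ p₁ q L, S.sort (· ≤ ·) = p₀ :: p₁ :: q :: L := by
    match S.sort (· ≤ ·), (length_sort (· ≤ ·) (s := S)) ▸ hcard with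
    | p₀ :: p₁ :: q :: L, _ => exact ⟨p₀, p₁, q, L, rfl⟩
  have hlen : #S - 2 = (q :: L).length := by
    have h := length_sort (· ≤ ·) (s := S)
    rw [hsort] at h
    simp only [List.length_cons] at h ⊢
    omega
  rw [Finset.prod, ← sort_eq S (· ≤ ·), Multiset.map_coe, Multiset.prod_coe, hsort, hlen,
    List.getElem!_cons_succ, List.getElem!_cons_succ, List.getElem!_cons_zero]
  exact List.prod_map_div_cast_sub_one_le_of_odd (hsort ▸ (sortedLT_sort S).pairwise)
    fun p hp => hS p ((mem_sort _).mp (hsort ▸ hp))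

/-- If `n` is an odd perfect number with exactly 9 distinct prime factors, then the
third smallest prime factor of `n` is at most 509. -/
theorem opn_nine_factors_third_le (n : ℕ) (hn : Nat.Perfect n) (hodd : Odd n)
    (hω : n.primeFactors.card = 9) :
    (Finset.sort n.primeFactors (· ≤ ·))[2]! ≤ 509 := by
  by_contra! hq
  set q := (Finset.sort n.primeFactors (· ≤ ·))[2]!
  have hlower : 2 < ∏ p ∈ n.primeFactors, (p : ℚ) / (p - 1) :=
    hn.abundancyIndex_eq_two ▸ Nat.abundancyIndex_lt_prod_primeFactors
      (Nat.nonempty_primeFactors.mp (card_pos.mp (by omega)))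
  have hupper := n.primeFactors.prod_div_cast_sub_one_le_of_odd
    (fun p hp => ⟨hodd.of_dvd_nat (Nat.dvd_of_mem_primeFactors hp),
      (Nat.prime_of_mem_primeFactors hp).one_lt⟩) (by omega)
  rw [hω] at hupper
  have hthird : ((q : ℚ) / (q - 1)) ^ 7 ≤ (510 / (510 - 1)) ^ 7 :=
    pow_le_pow_left₀ q.div_cast_sub_one_nonneg
      (Nat.div_cast_sub_one_le_of_le (a := 510) (by norm_num) hq) 7
  have hnum : (3 / 2 * (5 / 4) * (510 / (510 - 1)) ^ 7 : ℚ) < 2 := by norm_num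
  linarith
end

section
/- If n is an odd perfect number with exactly 17 distinct prime factors, then the smallest prime factor of n is at most 17, the second smallest prime factor is at most 53, and the third smallest prime factor is at most 1093. -/
/-!
Since `σ` is multiplicative and `σ(p^e) / p^e < p / (p - 1)`, a perfect number `n` satisfies
`2 ≤ ∏_{p ∣ n} p / (p - 1)`. The map `x ↦ x / (x - 1)` is decreasing, and the odd prime factors
`p₀ < p₁ < ⋯` of an odd `n` satisfy `pᵢ ≥ 2i + 3` and `pᵢ ≥ pₘ + 2(i - m)` for `i ≥ m`. With
17 factors, `p₀ ≥ 18`, `p₁ ≥ 54` or `p₂ ≥ 1094` would push the product below 2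
(to about `1.75`, `1.90` and `1.90` respectively).
-/

open Finset

theorem geom_sum_div_pow_lt_div_sub_one {K : Type*} [Field K] [LinearOrder K]
    [IsStrictOrderedRing K] {p : K} (hp : 1 < p) (e : ℕ) :
    (∑ k ∈ range (e + 1), p ^ k) / p ^ e < p / (p - 1) := by
  have hp1 : 0 < p - 1 := sub_pos.2 hp
  have hpe : 0 < p ^ e := pow_pos (by linarith) e
  rw [geom_sum_eq hp.ne', div_div, div_lt_div_iff₀ (by positivity) hp1, pow_succ]
  nlinarith

theorem div_sub_one_le_div_sub_one_s16 {K : Type*} [Field K] [LinearOrder K]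
    [IsStrictOrderedRing K] {x y : K} (hx : 1 < x) (hxy : x ≤ y) :
    y / (y - 1) ≤ x / (x - 1) := by
  rw [div_le_div_iff₀ (by linarith) (by linarith)]
  nlinarith

namespace Nat

theorem abundancyIndex_le_prod_primeFactors {n : ℕ} (hn : n ≠ 0) :
    n.abundancyIndex ≤ ∏ p ∈ n.primeFactors, (p : ℚ) / (p - 1) := by
  rw [abundancyIndex, Nat.sum_divisors hn]
  conv_lhs => arg 2; rw [prod_primeFactors_pow_factorization hn]
  push_cast
  rw [← prod_div_distrib]
  refine prod_le_prod (fun p _ => by positivity) fun p hp => ?_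
  have hp : (1 : ℚ) < p := by exact_mod_cast (prime_of_mem_primeFactors hp).one_lt
  exact (geom_sum_div_pow_lt_div_sub_one hp _).le

theorem Perfect.abundancyIndex_eq_two_s16 {n : ℕ} (h : n.Perfect) : n.abundancyIndex = 2 := by
  rw [abundancyIndex, (perfect_iff_sum_divisors_eq_two_mul h.2).1 h,
    div_eq_iff (by exact_mod_cast h.2.ne')]
  push_cast
  ring

theorem Perfect.two_le_prod_primeFactors {n : ℕ} (h : n.Perfect) :
    2 ≤ ∏ p ∈ n.primeFactors, (p : ℚ) / (p - 1) :=
  h.abundancyIndex_eq_two_s16 ▸ abundancyIndex_le_prod_primeFactors h.2.ne'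

end Nat

def oddLowerBound (m c i : ℕ) : ℕ := if i < m then 2 * i + 3 else c + 2 * (i - m)

namespace List

theorem SortedLT.getElem_add_two_mul_le {l : List ℕ} (hl : l.SortedLT) (hodd : ∀ x ∈ l, Odd x)
    {i j : ℕ} (hij : i ≤ j) (hj : j < l.length) :
    l[i] + 2 * (j - i) ≤ l[j] := by
  induction j, hij using Nat.le_induction with
  | base => simp
  | succ j hij ih =>
    have hj' : j < l.length := by omega
    have hstep : l[j] < l[j + 1] := hl.getElem_lt_getElem_iff.2 (Nat.lt_succ_self j)
    have := ih hj'
    have := Nat.odd_iff.1 (hodd _ (getElem_mem hj'))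
    have := Nat.odd_iff.1 (hodd _ (getElem_mem hj))
    omega

theorem SortedLT.oddLowerBound_le_getElem {l : List ℕ} (hl : l.SortedLT)
    (hodd : ∀ x ∈ l, Odd x) (hone : ∀ x ∈ l, 1 < x) {m c : ℕ} (hm : m < l.length)
    (hc : c ≤ l[m]) {i : ℕ} (hi : i < l.length) : oddLowerBound m c i ≤ l[i] := by
  unfold oddLowerBound
  split_ifs with him
  · have h0 : 0 < l.length := by omega
    have := hone _ (getElem_mem h0)
    have := Nat.odd_iff.1 (hodd _ (getElem_mem h0))
    have := hl.getElem_add_two_mul_le hodd (Nat.zero_le i) hi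
    omega
  · have := hl.getElem_add_two_mul_le hodd (not_lt.1 him) hi
    omega

theorem SortedLT.getElem_lt_of_two_le_prod {l : List ℕ} (hl : l.SortedLT)
    (hodd : ∀ x ∈ l, Odd x) (hone : ∀ x ∈ l, 1 < x)
    (hprod : 2 ≤ (l.map fun p : ℕ => (p : ℚ) / (p - 1)).prod) {m c : ℕ} (hm : m < l.length)
    (hc : 1 < c)
    (hbound : ∏ i ∈ Finset.range l.length,
      (oddLowerBound m c i : ℚ) / (oddLowerBound m c i - 1) < 2) :
    l[m] < c := by
  by_contra! hcm
  refine (hprod.trans ?_).not_gt hbound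
  rw [← Fin.prod_univ_fun_getElem, ← Fin.prod_univ_eq_prod_range]
  refine prod_le_prod (fun i _ => ?_) fun i _ => div_sub_one_le_div_sub_one_s16 ?_ ?_
  · have : (1 : ℚ) < l[(i : ℕ)] := by exact_mod_cast hone _ (getElem_mem i.2)
    exact div_nonneg (by linarith) (by linarith)
  · unfold oddLowerBound
    split_ifs <;> norm_cast <;> omega
  · exact_mod_cast hl.oddLowerBound_le_getElem hodd hone hm hcm i.2

end List

/-- If `n` is an odd perfect number with exactly 17 distinct prime factors, then its
smallest prime factor is at most 17, its second smallest prime factor is at most 53,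
and its third smallest prime factor is at most 1093. -/
theorem opn_seventeen_factors_bounds (n : ℕ) (hn : Nat.Perfect n) (hodd : Odd n)
    (hω : n.primeFactors.card = 17) :
    n.minFac ≤ 17 ∧ (Finset.sort n.primeFactors (· ≤ ·))[1]! ≤ 53 ∧
      (Finset.sort n.primeFactors (· ≤ ·))[2]! ≤ 1093 := by
  set l := Finset.sort n.primeFactors (· ≤ ·)
  have hlen : l.length = 17 := by rw [Finset.length_sort, hω]
  have hmem : ∀ p ∈ l, p ∈ n.primeFactors := fun p => (Finset.mem_sort _).1
  have hoddl : ∀ p ∈ l, Odd p := fun p hp =>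
    hodd.of_dvd_nat (Nat.dvd_of_mem_primeFactors (hmem p hp))
  have hone : ∀ p ∈ l, 1 < p := fun p hp => (Nat.prime_of_mem_primeFactors (hmem p hp)).one_lt
  have hprod : 2 ≤ (l.map fun p : ℕ => (p : ℚ) / (p - 1)).prod := by
    rw [← List.prod_toFinset _ (Finset.sort_nodup _ _), Finset.sort_toFinset]
    exact hn.two_le_prod_primeFactors
  have bound (m c : ℕ) (hm : m < 17) (hc : 1 < c)
      (hbound : ∏ i ∈ range 17, (oddLowerBound m c i : ℚ) / (oddLowerBound m c i - 1) < 2) :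
      l[m]! < c := by
    rw [getElem!_pos l m (by omega)]
    exact (Finset.sortedLT_sort _).getElem_lt_of_two_le_prod hoddl hone hprod _ hc (hlen ▸ hbound)
  have hmin : n.minFac ≤ l[0]! := by
    rw [getElem!_pos l 0 (by omega)]
    exact Nat.minFac_le_of_dvd (hone _ (List.getElem_mem _))
      (Nat.dvd_of_mem_primeFactors (hmem _ (List.getElem_mem _)))
  refine ⟨hmin.trans (Nat.le_of_lt_succ (bound 0 18 ?_ ?_ ?_)),
    Nat.le_of_lt_succ (bound 1 54 ?_ ?_ ?_), Nat.le_of_lt_succ (bound 2 1094 ?_ ?_ ?_)⟩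
  all_goals norm_num [oddLowerBound, Finset.prod_range_succ]
end
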